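/- Let V be a real vector space, I a finite nonempty index set, s : I → V an affinely independent family of points, σ a permutation of I, and T : V → V an affine map with T (s i) = s (σ i) for all i ∈ I. Then the set of fixed points of T lying in the open simplex on s equals the open simplex on the family of orbit barycenters (c ω)_{ω orbit of σ}; that is, {x : T x = x and x = ∑ a i • s i with all a i > 0 and ∑ a i = 1} = {∑_ω b ω • c ω : all b ω > 0 and ∑_ω b ω = 1}. -/

import Mathlib

/-!
An affine map permuting the vertices of a simplex sends the point with barycentric weights `a`
to the one with weights `a ∘ σ⁻¹`, so by affine independence a point of the open simplex is fixed
exactly when its weights are `σ`-invariant, i.e. constant on the orbits of `σ`. Weights equal to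
`β ω` on each orbit `ω` describe the same point as the weights `|ω| β ω` on the orbit barycenters,
and this reparametrization preserves positivity and total mass.
-/

open Finset

theorem MulAction.orbitRel.Quotient.exists_comp_mk_iff {G α β : Type*} [Group G] [MulAction G α]
    (g : G) (f : α → β) :
    (∃ F : orbitRel.Quotient (Subgroup.zpowers g) α → β, f = F ∘ Quotient.mk'') ↔
      ∀ x, f (g • x) = f x := by
  constructor
  · rintro ⟨F, rfl⟩ x
    exact congrArg F (Quotient.sound ⟨⟨g, Subgroup.mem_zpowers g⟩, rfl⟩)
  · intro hf
    have hzpow : ∀ n : ℤ, ∀ x, f ((g ^ n) • x) = f x := by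
      intro n
      induction n using Int.induction_on with
      | zero => simp
      | succ n ih => intro x; rw [zpow_add_one, mul_smul, ih, hf]
      | pred n ih => intro x; rw [zpow_sub_one, mul_smul, ih, ← hf, smul_inv_smul]
    refine ⟨Quotient.lift f ?_, rfl⟩
    rintro x _ ⟨⟨_, n, rfl⟩, rfl⟩
    exact hzpow n _

theorem MulAction.orbitRel.Quotient.orbit_eq_coe_filter {G α : Type*} [Group G] [MulAction G α]
    [Fintype α] [DecidableEq (orbitRel.Quotient G α)] (ω : orbitRel.Quotient G α) :
    ω.orbit = ↑({a | Quotient.mk'' a = ω} : Finset α) := by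
  ext a
  simp [mem_orbit]

def openSimplex (𝕜 : Type*) {V ι : Type*} [Semiring 𝕜] [PartialOrder 𝕜] [AddCommMonoid V]
    [Module 𝕜 V] [Fintype ι] (t : ι → V) : Set V :=
  {x | ∃ w : ι → 𝕜, (∀ i, 0 < w i) ∧ ∑ i, w i = 1 ∧ x = ∑ i, w i • t i}

section Fibers

variable {𝕜 V ι κ : Type*} [Field 𝕜] [AddCommGroup V] [Module 𝕜 V] [Fintype ι] [Fintype κ]
  [DecidableEq κ] {π : ι → κ} {s : ι → V} {c : κ → V}

theorem sum_comp_smul_eq_sum_card_mul_smul [CharZero 𝕜] (hπ : π.Surjective)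
    (hc : ∀ q, c q = (#{i | π i = q} : 𝕜)⁻¹ • ∑ i with π i = q, s i) (β : κ → 𝕜) :
    ∑ i, β (π i) • s i = ∑ q, (#{i | π i = q} * β q) • c q := by
  rw [← sum_fiberwise univ π]
  refine sum_congr rfl fun q _ => ?_
  obtain ⟨i, rfl⟩ := hπ q
  have hcard : (#{j | π j = π i} : 𝕜) ≠ 0 := Nat.cast_ne_zero.2 (card_ne_zero.2 ⟨i, by simp⟩)
  rw [hc, smul_smul, mul_right_comm, mul_inv_cancel₀ hcard, one_mul, smul_sum]
  exact sum_congr rfl fun j hj => by rw [(mem_filter.1 hj).2]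

theorem openSimplex_eq_setOf_sum_comp_smul [LinearOrder 𝕜] [IsStrictOrderedRing 𝕜]
    (hπ : π.Surjective) (hc : ∀ q, c q = (#{i | π i = q} : 𝕜)⁻¹ • ∑ i with π i = q, s i) :
    openSimplex 𝕜 c =
      {x | ∃ β : κ → 𝕜, (∀ q, 0 < β q) ∧ ∑ i, β (π i) = 1 ∧ x = ∑ i, β (π i) • s i} := by
  have hcard : ∀ q, (0 : 𝕜) < #{i | π i = q} := fun q => by
    obtain ⟨i, rfl⟩ := hπ q
    exact Nat.cast_pos.2 (card_pos.2 ⟨i, by simp⟩)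
  have hsum : ∀ β : κ → 𝕜, ∑ i, β (π i) = ∑ q, #{i | π i = q} * β q := fun β => by
    simp [sum_comp, nsmul_eq_mul, image_univ_of_surjective hπ]
  ext x
  constructor
  · rintro ⟨b, hb, hb1, rfl⟩
    set β : κ → 𝕜 := fun q => (#{i | π i = q} : 𝕜)⁻¹ * b q
    have hβ : ∀ q, #{i | π i = q} * β q = b q := fun q => mul_inv_cancel_left₀ (hcard q).ne' (b q)
    refine ⟨β, fun q => mul_pos (inv_pos.2 (hcard q)) (hb q), ?_, ?_⟩
    · rw [hsum, sum_congr rfl fun q _ => hβ q, hb1]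
    · simp only [sum_comp_smul_eq_sum_card_mul_smul hπ hc, hβ]
  · rintro ⟨β, hβ, hβ1, rfl⟩
    exact ⟨fun q => #{i | π i = q} * β q, fun q => mul_pos (hcard q) (hβ q),
      (hsum β).symm.trans hβ1, sum_comp_smul_eq_sum_card_mul_smul hπ hc β⟩

end Fibers

theorem AffineIndependent.map_affineCombination_eq_self_iff {k V P ι : Type*} [Ring k]
    [AddCommGroup V] [Module k V] [AddTorsor V P] [Fintype ι] {s : ι → P}
    (hs : AffineIndependent k s) {σ : Equiv.Perm ι} {T : P →ᵃ[k] P}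
    (hT : ∀ i, T (s i) = s (σ i)) {a : ι → k} (ha : ∑ i, a i = 1) :
    T (univ.affineCombination k s a) = univ.affineCombination k s a ↔ ∀ i, a (σ i) = a i := by
  have hreindex : univ.affineCombination k s a = univ.affineCombination k (s ∘ σ) (a ∘ σ) := by
    simpa using affineCombination_map (k := k) univ σ.toEmbedding a s
  have haσ : ∑ i, (a ∘ σ) i = 1 := (Equiv.sum_comp σ a).trans ha
  rw [map_affineCombination _ _ _ ha, show T ∘ s = s ∘ σ from funext hT, hreindex]
  constructor
  · intro h
    have := (affineIndependent_iff_eq_of_fintype_affineCombination_eq k _).1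
      (hs.comp_embedding σ.toEmbedding) _ _ ha haσ h
    exact fun i => (congrFun this i).symm
  · intro h
    rw [show a ∘ σ = a from funext h]

theorem AffineIndependent.map_sum_smul_eq_self_iff {k V ι : Type*} [Ring k] [AddCommGroup V]
    [Module k V] [Fintype ι] {s : ι → V} (hs : AffineIndependent k s) {σ : Equiv.Perm ι}
    {T : V →ᵃ[k] V} (hT : ∀ i, T (s i) = s (σ i)) {a : ι → k} (ha : ∑ i, a i = 1) :
    T (∑ i, a i • s i) = ∑ i, a i • s i ↔ ∀ i, a (σ i) = a i := by
  rw [← univ.affineCombination_eq_linear_combination s a ha]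
  exact hs.map_affineCombination_eq_self_iff hT ha

theorem fixed_points_open_simplex_eq_open_simplex_orbit_barycenters_general
    {V : Type*} [AddCommGroup V] [Module ℝ V]
    {I : Type*} [Fintype I]
    (s : I → V) (hs : AffineIndependent ℝ s)
    (σ : Equiv.Perm I) (T : V →ᵃ[ℝ] V) (hT : ∀ i, T (s i) = s (σ i))
    (c : MulAction.orbitRel.Quotient (Subgroup.zpowers σ) I → V)
    (hc : ∀ ω, c ω = (Nat.card ω.orbit : ℝ)⁻¹ • ∑ᶠ i ∈ ω.orbit, s i) :
    {x : V | T x = x ∧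
        ∃ a : I → ℝ, (∀ i, 0 < a i) ∧ ∑ i, a i = 1 ∧ x = ∑ i, a i • s i} =
      {x : V | ∃ b : MulAction.orbitRel.Quotient (Subgroup.zpowers σ) I → ℝ,
        (∀ ω, 0 < b ω) ∧ ∑ᶠ ω, b ω = 1 ∧ x = ∑ᶠ ω, b ω • c ω} := by
  classical
  let _ : Fintype (MulAction.orbitRel.Quotient (Subgroup.zpowers σ) I) := Fintype.ofFinite _
  let π : I → MulAction.orbitRel.Quotient (Subgroup.zpowers σ) I := Quotient.mk''
  have hπ : π.Surjective := Quotient.mk''_surjective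
  have hc' : ∀ ω, c ω = (#{i | π i = ω} : ℝ)⁻¹ • ∑ i with π i = ω, s i := fun ω => by
    rw [hc, ω.orbit_eq_coe_filter, Nat.card_coe_set_eq, Set.ncard_coe_finset,
      finsum_mem_coe_finset]
  simp only [finsum_eq_sum_of_fintype]
  change _ = openSimplex ℝ c
  rw [openSimplex_eq_setOf_sum_comp_smul hπ hc']
  ext x
  constructor
  · rintro ⟨hx, a, ha, ha1, rfl⟩
    obtain ⟨β, rfl⟩ := (MulAction.orbitRel.Quotient.exists_comp_mk_iff σ a).2
      ((hs.map_sum_smul_eq_self_iff hT ha1).1 hx)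
    exact ⟨β, hπ.forall.2 ha, ha1, rfl⟩
  · rintro ⟨β, hβ, hβ1, rfl⟩
    refine ⟨(hs.map_sum_smul_eq_self_iff hT hβ1).2 ?_, β ∘ π, fun i => hβ (π i), hβ1, rfl⟩
    exact (MulAction.orbitRel.Quotient.exists_comp_mk_iff σ _).1 ⟨β, rfl⟩

/-- Let `s : I → V` be an affinely independent family in a real vector space, `σ` a
permutation of `I`, and `T` an affine map with `T (s i) = s (σ i)` for all `i`. Then the
set of fixed points of `T` lying in the open simplex on `s` equals the open simplex on
the family of orbit barycenters `c ω = |ω|⁻¹ • ∑ i ∈ ω, s i`. -/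
theorem fixed_points_open_simplex_eq_open_simplex_orbit_barycenters
    {V : Type*} [AddCommGroup V] [Module ℝ V]
    {I : Type*} [Fintype I] [Nonempty I]
    (s : I → V) (hs : AffineIndependent ℝ s)
    (σ : Equiv.Perm I) (T : V →ᵃ[ℝ] V) (hT : ∀ i, T (s i) = s (σ i))
    (c : MulAction.orbitRel.Quotient (Subgroup.zpowers σ) I → V)
    (hc : ∀ ω, c ω = (Nat.card ω.orbit : ℝ)⁻¹ • ∑ᶠ i ∈ ω.orbit, s i) :
    {x : V | T x = x ∧
        ∃ a : I → ℝ, (∀ i, 0 < a i) ∧ ∑ i, a i = 1 ∧ x = ∑ i, a i • s i} =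
      {x : V | ∃ b : MulAction.orbitRel.Quotient (Subgroup.zpowers σ) I → ℝ,
        (∀ ω, 0 < b ω) ∧ ∑ᶠ ω, b ω = 1 ∧ x = ∑ᶠ ω, b ω • c ω} :=
  fixed_points_open_simplex_eq_open_simplex_orbit_barycenters_general s hs σ T hT c hc
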